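/- Let A and B be C*-algebras, φ : A → B a completely positive map, and suppose φ satisfies φ(1)φ(e*e) = φ(e)*φ(e) for all e ∈ A (A unital). Then φ is order zero: for all positive a, b ∈ A with ab = 0, one has φ(a)φ(b) = 0. -/
import Mathlib

/-- A completely positive map `φ` on a unital C*-algebra satisfying
`φ(1)φ(e*e) = φ(e)*φ(e)` for all `e` is order zero: it sends orthogonal positive
elements to orthogonal elements. -/
theorem cp_map_identity_implies_order_zero
    {A B : Type*} [CStarAlgebra A] [CStarAlgebra B]
    [PartialOrder A] [StarOrderedRing A] [PartialOrder B] [StarOrderedRing B]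
    (φ : A →ₗ[ℂ] B)
    (hcp : ∀ (n : ℕ) (x : Fin n → A) (c : Fin n → B),
      0 ≤ ∑ i, ∑ j, star (c i) * φ (star (x i) * x j) * c j)
    (hcontr : ∀ a : A, ‖φ a‖ ≤ ‖a‖)
    (hid : ∀ e : A, φ 1 * φ (star e * e) = star (φ e) * φ e) :
    ∀ a b : A, 0 ≤ a → 0 ≤ b → a * b = 0 → φ a * φ b = 0 := by
  intro a b ha hb hab
  -- φ maps nonneg to nonneg
  have hpos : ∀ x : A, 0 ≤ x → 0 ≤ φ x := by
    intro x hx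
    have h1 := hcp 1 (fun _ => CFC.sqrt x) (fun _ => 1)
    simpa [Fin.sum_univ_one, (IsSelfAdjoint.of_nonneg (CFC.sqrt_nonneg (a := x))).star_eq,
      CFC.sqrt_mul_sqrt_self x hx] using h1
  have hsa : star (φ a) = φ a := (IsSelfAdjoint.of_nonneg (hpos a ha)).star_eq
  have E1 := hid (a + b)
  have E2 := hid (a + (Complex.I) • b)
  have Ea := hid a
  have Eb := hid b
  set u := φ 1 * φ (star a * b) with hu
  set v := φ 1 * φ (star b * a) with hv
  set p := star (φ a) * φ b with hp
  set q := star (φ b) * φ a with hq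
  -- expand E1
  rw [star_add, add_mul, mul_add, mul_add] at E1
  simp only [map_add, mul_add, star_add, add_mul] at E1
  rw [Ea, Eb] at E1
  have h1 : u + v = p + q := by
    rw [← sub_eq_zero] at E1 ⊢
    rw [← E1]; abel
  -- expand E2
  simp only [star_add, star_smul, Complex.star_def, Complex.conj_I, add_mul, mul_add,
    smul_mul_assoc, mul_smul_comm, smul_smul, neg_smul, mul_neg, neg_mul, neg_neg,
    Complex.I_mul_I, one_smul, map_add, map_smul, map_neg, smul_add, neg_add_rev] at E2
  rw [Ea, Eb] at E2
  have h2 : Complex.I • u - Complex.I • v = Complex.I • p - Complex.I • q := by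
    rw [← sub_eq_zero] at E2 ⊢
    rw [← E2]; module
  have h2' : u - v = p - q := by
    refine smul_right_injective B Complex.I_ne_zero ?_
    show Complex.I • (u - v) = Complex.I • (p - q)
    rw [smul_sub, smul_sub]; exact h2
  have h3 : (2 : ℂ) • u = (2 : ℂ) • p := by
    rw [two_smul, two_smul]
    calc u + u = (u + v) + (u - v) := by abel
    _ = (p + q) + (p - q) := by rw [h1, h2']
    _ = p + p := by abel
  have key : u = p := smul_right_injective B (by norm_num : (2:ℂ) ≠ 0) h3
  have hsaA : star a = a := (IsSelfAdjoint.of_nonneg ha).star_eq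
  rw [hu, hsaA, hab, map_zero, mul_zero] at key
  rw [← hsa]
  exact key.symm
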